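/- (Hilbert's fourth problem, scalar flag curvature: Numata-type example.) Let Ω = {x ∈ ℝⁿ : |x| < 1}, F(x,y) = |y| + ⟨x,y⟩ and P(x,y) = |y|²/(2(|y| + ⟨x,y⟩)) on Ω × (ℝⁿ∖{0}); consider the projectively flat spray G^i = P y^i with N^j_i = ∂G^j/∂y^i. Then: (1) F > 0 on Ω × (ℝⁿ∖{0}); (2) S₀P = −2P², hence the Ricci scalar ρ := P² − S₀P = 3P² = (3/4)|y|⁴/(|y| + ⟨x,y⟩)²; (3) d_hF = 0, i.e. ∂F/∂x^i = Σ_j N^j_i ∂F/∂y^j for all i. Hence F is a projectively flat Finsler function metricizing the spray, of scalar flag curvature κ = ρ/F² = (3/4)|y|⁴/(|y| + ⟨x,y⟩)⁴. -/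

import Mathlib

open Real Finset

/-- Partial derivative with respect to the base coordinate `x^i`. -/
noncomputable def pdx {n : ℕ} (f : ((Fin n → ℝ) × (Fin n → ℝ)) → ℝ) (i : Fin n)
    (p : (Fin n → ℝ) × (Fin n → ℝ)) : ℝ :=
  fderiv ℝ f p (Pi.single i 1, 0)

/-- Partial derivative with respect to the fibre coordinate `y^i`. -/
noncomputable def pdy {n : ℕ} (f : ((Fin n → ℝ) × (Fin n → ℝ)) → ℝ) (i : Fin n)
    (p : (Fin n → ℝ) × (Fin n → ℝ)) : ℝ :=
  fderiv ℝ f p (0, Pi.single i 1)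

/-- Partial derivative of a function on the base with respect to `x^i`. -/
noncomputable def pdb {n : ℕ} (f : (Fin n → ℝ) → ℝ) (i : Fin n) (x : Fin n → ℝ) : ℝ :=
  fderiv ℝ f x (Pi.single i 1)

/-- Partial derivative with respect to the full coordinates `(x, y)` of `ℝ²ⁿ`,
indexed by `Fin n ⊕ Fin n` (`inl` = base directions, `inr` = fibre directions). -/
noncomputable def pdz {n : ℕ} (f : ((Fin n → ℝ) × (Fin n → ℝ)) → ℝ) (a : Fin n ⊕ Fin n)
    (p : (Fin n → ℝ) × (Fin n → ℝ)) : ℝ :=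
  match a with
  | Sum.inl i => pdx f i p
  | Sum.inr i => pdy f i p

/-- The spray vector field `S = yᵏ ∂/∂xᵏ - 2Gᵏ ∂/∂yᵏ` applied to a function. -/
noncomputable def sprayOp {n : ℕ} (G : Fin n → ((Fin n → ℝ) × (Fin n → ℝ)) → ℝ)
    (f : ((Fin n → ℝ) × (Fin n → ℝ)) → ℝ) (p : (Fin n → ℝ) × (Fin n → ℝ)) : ℝ :=
  ∑ k, (p.2 k * pdx f k p - 2 * G k p * pdy f k p)

/-- The flat spray `S₀ = yᵏ ∂/∂xᵏ` applied to a function. -/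
noncomputable def flatOp {n : ℕ} (f : ((Fin n → ℝ) × (Fin n → ℝ)) → ℝ)
    (p : (Fin n → ℝ) × (Fin n → ℝ)) : ℝ :=
  ∑ k, p.2 k * pdx f k p

/-- The coefficients `N^i_j = ∂G^i/∂y^j` of the nonlinear connection. -/
noncomputable def Ncon {n : ℕ} (G : Fin n → ((Fin n → ℝ) × (Fin n → ℝ)) → ℝ)
    (i j : Fin n) : ((Fin n → ℝ) × (Fin n → ℝ)) → ℝ :=
  fun p => pdy (G i) j p

/-- The components `R^i_j = 2 ∂G^i/∂x^j - S(N^i_j) - N^i_k N^k_j` of the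
Jacobi endomorphism. -/
noncomputable def jacobiR {n : ℕ} (G : Fin n → ((Fin n → ℝ) × (Fin n → ℝ)) → ℝ)
    (i j : Fin n) (p : (Fin n → ℝ) × (Fin n → ℝ)) : ℝ :=
  2 * pdx (G i) j p - sprayOp G (Ncon G i j) p - ∑ k, Ncon G i k p * Ncon G k j p

/-- The domain `Ω × (ℝⁿ ∖ {0})`. -/
def sprayDom {n : ℕ} (Ω : Set (Fin n → ℝ)) : Set ((Fin n → ℝ) × (Fin n → ℝ)) :=
  Ω ×ˢ {y | y ≠ 0}

/-- Squared Euclidean norm `|v|²` on `ℝⁿ`. -/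
def nsq {n : ℕ} (v : Fin n → ℝ) : ℝ := ∑ i, v i ^ 2

/-- Euclidean inner product `⟨v, w⟩` on `ℝⁿ`. -/
def dotp {n : ℕ} (v w : Fin n → ℝ) : ℝ := ∑ i, v i * w i

/-!
`F` is affine in `x` with `∂F/∂x = y`, and `2 F P = |y|²`. Differentiating the latter gives
`F dP = ⟨y, dy⟩ - P dF`; in the `x`-directions this is `F ∂P/∂xᵏ = -P yᵏ`, whence
`S₀P = -P |y|² / F = -2P²`. For `Gʲ = P yʲ` one has `Nʲᵢ = P δʲᵢ + yʲ ∂P/∂yⁱ`, so by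
Euler's relation `yʲ ∂F/∂yʲ = F` the contraction `Nʲᵢ ∂F/∂yʲ` equals
`P ∂F/∂yⁱ + F ∂P/∂yⁱ = yⁱ = ∂F/∂xⁱ`.
Positivity of `F` is Cauchy–Schwarz: `|⟨x, y⟩| ≤ |x| |y| < |y|` on the unit ball.
-/

section DotProduct

variable {n : ℕ}

@[simp] lemma dotp_single_one_right (v : Fin n → ℝ) (i : Fin n) :
    dotp v (Pi.single i 1) = v i := by
  simp [dotp, Pi.single_apply]

@[simp] lemma dotp_zero_right (v : Fin n → ℝ) : dotp v 0 = 0 := by simp [dotp]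

lemma nsq_eq_dotp (v : Fin n → ℝ) : nsq v = dotp v v := by simp [nsq, dotp, sq]

lemma nsq_pos {v : Fin n → ℝ} (hv : v ≠ 0) : 0 < nsq v := by
  obtain ⟨i, hi⟩ := Function.ne_iff.mp hv
  exact sum_pos' (fun j _ => sq_nonneg (v j)) ⟨i, mem_univ i, pow_two_pos_of_ne_zero hi⟩

lemma dotp_sq_le_nsq_mul_nsq (v w : Fin n → ℝ) : dotp v w ^ 2 ≤ nsq v * nsq w :=
  sum_mul_sq_le_sq_mul_sq _ _ _

def dotpCLM (v : Fin n → ℝ) : (Fin n → ℝ) →L[ℝ] ℝ := ∑ i, v i • ContinuousLinearMap.proj i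

@[simp] lemma dotpCLM_apply (v w : Fin n → ℝ) : dotpCLM v w = dotp v w := by
  simp [dotpCLM, dotp]

variable {E : Type*} [NormedAddCommGroup E] [NormedSpace ℝ E]

lemma HasFDerivAt.dotp {f g : E → Fin n → ℝ} {f' g' : E →L[ℝ] Fin n → ℝ} {p : E}
    (hf : HasFDerivAt f f' p) (hg : HasFDerivAt g g' p) :
    HasFDerivAt (fun q => _root_.dotp (f q) (g q))
      ((dotpCLM (f p)).comp g' + (dotpCLM (g p)).comp f') p := by
  refine (HasFDerivAt.fun_sum (u := univ) fun i _ =>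
      ((hasFDerivAt_apply i (f p)).comp p hf).mul
        ((hasFDerivAt_apply i (g p)).comp p hg)).congr_fderiv ?_
  ext v
  simp [_root_.dotp, sum_add_distrib]

end DotProduct

section QuotientRule

variable {E : Type*} [NormedAddCommGroup E] [NormedSpace ℝ E]

lemma HasFDerivAt.div {u w : E → ℝ} {u' w' : E →L[ℝ] ℝ} {p : E}
    (hu : HasFDerivAt u u' p) (hw : HasFDerivAt w w' p) (hw0 : w p ≠ 0) :
    HasFDerivAt (fun q => u q / w q) ((w p)⁻¹ • (u' - (u p / w p) • w')) p := by
  simp only [div_eq_mul_inv]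
  refine (hu.mul ((hasDerivAt_inv hw0).comp_hasFDerivAt p hw)).congr_fderiv ?_
  refine ContinuousLinearMap.ext fun v => ?_
  simp only [neg_smul, smul_neg, Function.comp_apply, add_apply, neg_apply, smul_apply, smul_eq_mul,
    sub_apply]
  field_simp
  ring

end QuotientRule

section ProjectiveSpray

variable {n : ℕ} {P : (Fin n → ℝ) × (Fin n → ℝ) → ℝ} {p : (Fin n → ℝ) × (Fin n → ℝ)}

lemma Ncon_projective (hP : DifferentiableAt ℝ P p) (i j : Fin n) :
    Ncon (fun j q => P q * q.2 j) j i p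
      = P p * (Pi.single i 1 : Fin n → ℝ) j + p.2 j * pdy P i p := by
  have hyj : HasFDerivAt (fun q : (Fin n → ℝ) × (Fin n → ℝ) => q.2 j)
      ((ContinuousLinearMap.proj j).comp (ContinuousLinearMap.snd ℝ _ _)) p :=
    ((ContinuousLinearMap.proj (R := ℝ) (φ := fun _ : Fin n => ℝ) j).comp
      (ContinuousLinearMap.snd ℝ (Fin n → ℝ) (Fin n → ℝ))).hasFDerivAt
  have hG : HasFDerivAt (fun q => P q * q.2 j) _ p := hP.hasFDerivAt.mul hyj
  rw [Ncon, pdy, hG.fderiv]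
  simp [pdy]

lemma sum_Ncon_projective_mul (hP : DifferentiableAt ℝ P p) (i : Fin n) (w : Fin n → ℝ) :
    ∑ j, Ncon (fun j q => P q * q.2 j) j i p * w j
      = P p * w i + pdy P i p * ∑ j, p.2 j * w j := by
  simp only [Ncon_projective hP, add_mul, sum_add_distrib, Pi.single_apply, mul_sum]
  simp [mul_comm, mul_left_comm]

end ProjectiveSpray

section Numata

open ContinuousLinearMap

variable {n : ℕ} {p : (Fin n → ℝ) × (Fin n → ℝ)}

noncomputable def numataF (p : (Fin n → ℝ) × (Fin n → ℝ)) : ℝ := √(nsq p.2) + dotp p.1 p.2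

noncomputable def numataP (p : (Fin n → ℝ) × (Fin n → ℝ)) : ℝ := nsq p.2 / (2 * numataF p)

lemma numataF_pos (hx : nsq p.1 < 1) (hy : p.2 ≠ 0) : 0 < numataF p := by
  have hy2 := nsq_pos hy
  have hlt : dotp p.1 p.2 ^ 2 < √(nsq p.2) ^ 2 := by
    rw [sq_sqrt hy2.le]
    nlinarith [dotp_sq_le_nsq_mul_nsq p.1 p.2]
  have := (abs_lt_of_sq_lt_sq' hlt (sqrt_nonneg _)).1
  rw [numataF]
  linarith

lemma nsq_eq_two_mul_numataP_mul_numataF (hF : numataF p ≠ 0) :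
    nsq p.2 = 2 * numataP p * numataF p := by
  rw [numataP]
  field_simp

noncomputable def numataFDeriv (p : (Fin n → ℝ) × (Fin n → ℝ)) :
    ((Fin n → ℝ) × (Fin n → ℝ)) →L[ℝ] ℝ :=
  (dotpCLM p.2).comp (fst ℝ _ _) + (√(nsq p.2))⁻¹ • (dotpCLM p.2).comp (snd ℝ _ _)
    + (dotpCLM p.1).comp (snd ℝ _ _)

lemma hasFDerivAt_nsq_snd :
    HasFDerivAt (fun q : (Fin n → ℝ) × (Fin n → ℝ) => nsq q.2)
      (2 • (dotpCLM p.2).comp (snd ℝ _ _)) p := by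
  simp only [nsq_eq_dotp]
  exact (hasFDerivAt_snd.dotp hasFDerivAt_snd).congr_fderiv (two_nsmul _).symm

lemma hasFDerivAt_numataF (hy : p.2 ≠ 0) : HasFDerivAt numataF (numataFDeriv p) p := by
  have hy2 := (nsq_pos hy).ne'
  refine ((hasFDerivAt_nsq_snd.sqrt hy2).add
    (hasFDerivAt_fst.dotp hasFDerivAt_snd)).congr_fderiv ?_
  refine ContinuousLinearMap.ext fun v => ?_
  simp only [one_div, mul_inv_rev, add_apply, smul_apply, comp_apply, coe_fst', coe_snd',
    dotpCLM_apply, nsmul_eq_mul, Nat.cast_ofNat, smul_eq_mul, numataFDeriv]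
  ring

lemma pdx_numataF (hy : p.2 ≠ 0) (i : Fin n) : pdx numataF i p = p.2 i := by
  simp [pdx, (hasFDerivAt_numataF hy).fderiv, numataFDeriv]

lemma pdy_numataF (hy : p.2 ≠ 0) (i : Fin n) :
    pdy numataF i p = p.2 i / √(nsq p.2) + p.1 i := by
  simp [pdy, (hasFDerivAt_numataF hy).fderiv, numataFDeriv, div_eq_inv_mul]

lemma sum_mul_pdy_numataF (hy : p.2 ≠ 0) : ∑ j, p.2 j * pdy numataF j p = numataF p := by
  have hs : 0 < √(nsq p.2) := sqrt_pos.2 (nsq_pos hy)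
  calc ∑ j, p.2 j * pdy numataF j p = nsq p.2 / √(nsq p.2) + dotp p.1 p.2 := by
        simp only [pdy_numataF hy, nsq, dotp, mul_add, sum_add_distrib, sum_div]
        congr 1 <;> refine sum_congr rfl fun j _ => by ring
    _ = numataF p := by
        rw [numataF]
        congr 1
        rw [div_eq_iff hs.ne', ← sq, sq_sqrt (nsq_pos hy).le]

lemma hasFDerivAt_numataP (hy : p.2 ≠ 0) (hF : numataF p ≠ 0) :
    HasFDerivAt numataP
      ((numataF p)⁻¹ • ((dotpCLM p.2).comp (snd ℝ _ _) - numataP p • numataFDeriv p)) p := by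
  refine (hasFDerivAt_nsq_snd.div ((hasFDerivAt_numataF hy).const_mul 2)
    (mul_ne_zero two_ne_zero hF)).congr_fderiv ?_
  refine ContinuousLinearMap.ext fun v => ?_
  simp only [mul_inv_rev, smul_apply, sub_apply, comp_apply, coe_snd', dotpCLM_apply, nsmul_eq_mul,
    Nat.cast_ofNat, smul_eq_mul, numataP]
  ring

lemma numataF_mul_pdx_numataP (hy : p.2 ≠ 0) (hF : numataF p ≠ 0) (i : Fin n) :
    numataF p * pdx numataP i p = -(numataP p * p.2 i) := by
  simp [pdx, (hasFDerivAt_numataP hy hF).fderiv, numataFDeriv, hF]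

lemma numataF_mul_pdy_numataP (hy : p.2 ≠ 0) (hF : numataF p ≠ 0) (i : Fin n) :
    numataF p * pdy numataP i p = p.2 i - numataP p * pdy numataF i p := by
  simp [pdy, (hasFDerivAt_numataP hy hF).fderiv, (hasFDerivAt_numataF hy).fderiv, hF]

lemma flatOp_numataP (hy : p.2 ≠ 0) (hF : numataF p ≠ 0) :
    flatOp numataP p = -2 * numataP p ^ 2 := by
  refine mul_left_cancel₀ hF ?_
  calc numataF p * flatOp numataP p
      = ∑ k, p.2 k * (numataF p * pdx numataP k p) := by
        rw [flatOp, mul_sum]; congr 1; ext k; ring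
    _ = -numataP p * nsq p.2 := by
        simp only [numataF_mul_pdx_numataP hy hF, nsq, mul_sum]; congr 1; ext k; ring
    _ = numataF p * (-2 * numataP p ^ 2) := by
        rw [nsq_eq_two_mul_numataP_mul_numataF hF]; ring

lemma pdx_numataF_eq_sum_Ncon_mul_pdy (hy : p.2 ≠ 0) (hF : numataF p ≠ 0) (i : Fin n) :
    pdx numataF i p = ∑ j, Ncon (fun j q => numataP q * q.2 j) j i p * pdy numataF j p := by
  rw [sum_Ncon_projective_mul (hasFDerivAt_numataP hy hF).differentiableAt,
    sum_mul_pdy_numataF hy, pdx_numataF hy]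
  linear_combination -numataF_mul_pdy_numataP hy hF i

end Numata

/-- Hilbert's fourth problem, scalar flag curvature: the
Numata-type example. For `F(x,y) = |y| + ⟨x,y⟩` on the unit ball,
`P = |y|²/(2(|y|+⟨x,y⟩))` and `G^i = P y^i`: `F > 0`, `S₀P = -2P²` (so
`ρ = P² - S₀P = 3P² = (3/4)|y|⁴/(|y|+⟨x,y⟩)²`), and `d_hF = 0`; hence `F` is a
projectively flat Finsler function metricizing the spray, of scalar flag
curvature `κ = ρ/F² = (3/4)|y|⁴/(|y|+⟨x,y⟩)⁴`. -/
theorem hilbert_fourth_numata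
    (n : ℕ)
    (F P : ((Fin n → ℝ) × (Fin n → ℝ)) → ℝ)
    (hF : ∀ p, F p = Real.sqrt (nsq p.2) + dotp p.1 p.2)
    (hP : ∀ p, P p = nsq p.2 / (2 * (Real.sqrt (nsq p.2) + dotp p.1 p.2)))
    (G : Fin n → ((Fin n → ℝ) × (Fin n → ℝ)) → ℝ)
    (hGdef : ∀ i p, G i p = P p * p.2 i) :
    ∀ p ∈ sprayDom {x : Fin n → ℝ | nsq x < 1},
      0 < F p ∧
      flatOp P p = -2 * P p ^ 2 ∧
      P p ^ 2 - flatOp P p = 3 * P p ^ 2 ∧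
      3 * P p ^ 2 = (3 / 4) * nsq p.2 ^ 2 / (Real.sqrt (nsq p.2) + dotp p.1 p.2) ^ 2 ∧
      (∀ i, pdx F i p = ∑ j, Ncon G j i p * pdy F j p) := by
  obtain rfl : F = numataF := funext hF
  obtain rfl : P = numataP := funext hP
  obtain rfl : G = fun j q => numataP q * q.2 j := funext₂ hGdef
  rintro p ⟨hx, hy⟩
  have hFpos : 0 < numataF p := numataF_pos hx hy
  have hS₀P := flatOp_numataP hy hFpos.ne'
  refine ⟨hFpos, hS₀P, by rw [hS₀P]; ring, ?_, pdx_numataF_eq_sum_Ncon_mul_pdy hy hFpos.ne'⟩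
  change 3 * numataP p ^ 2 = 3 / 4 * nsq p.2 ^ 2 / numataF p ^ 2
  rw [numataP, div_pow, mul_pow]
  ring
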